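/- Let R be a commutative ring and M an R-module. Then id_R(M) ≤ cd_R(M) + wdim(R), where cd_R(M) is the cotorsion dimension of M. -/

import Mathlib

open CategoryTheory Opposite

noncomputable section

universe u

variable (R : Type u) [CommRing R]

/-- `ExtVanish R M N n` : the `n`-th Ext group `Ext^n_R(M, N)` vanishes. -/
def ExtVanish (M N : ModuleCat.{u} R) (n : ℕ) : Prop :=
  Subsingleton (((Ext R (ModuleCat.{u} R) n).obj (op M)).obj N)

/-- `TorVanish R M N n` : the `n`-th Tor group `Tor_n^R(M, N)` vanishes. -/
def TorVanish (M N : ModuleCat.{u} R) (n : ℕ) : Prop :=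
  Subsingleton (((Tor (ModuleCat.{u} R) n).obj M).obj N)

/-- `pdLE R M n` : the projective dimension of `M` is at most `n`. -/
def pdLE (M : ModuleCat.{u} R) (n : ℕ) : Prop :=
  ∀ N : ModuleCat.{u} R, ExtVanish R M N (n + 1)

/-- `idLE R M n` : the injective dimension of `M` is at most `n`. -/
def idLE (M : ModuleCat.{u} R) (n : ℕ) : Prop :=
  ∀ N : ModuleCat.{u} R, ExtVanish R N M (n + 1)

/-- `fdLE R M n` : the flat dimension of `M` is at most `n`. -/
def fdLE (M : ModuleCat.{u} R) (n : ℕ) : Prop :=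
  ∀ N : ModuleCat.{u} R, TorVanish R M N (n + 1)

/-- `cdLE R M n` : the cotorsion dimension of `M` is at most `n`, i.e.
`Ext^{n+1}_R(F, M) = 0` for every flat `R`-module `F`. -/
def cdLE (M : ModuleCat.{u} R) (n : ℕ) : Prop :=
  ∀ F : ModuleCat.{u} R, Module.Flat R F → ExtVanish R F M (n + 1)

/-- The projective dimension of a module, as an element of `ℕ∞`. -/
def pd (M : ModuleCat.{u} R) : ℕ∞ := sInf ((↑) '' {n : ℕ | pdLE R M n})

/-- The injective dimension of a module, as an element of `ℕ∞`. -/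
def injd (M : ModuleCat.{u} R) : ℕ∞ := sInf ((↑) '' {n : ℕ | idLE R M n})

/-- The flat dimension of a module, as an element of `ℕ∞`. -/
def fd (M : ModuleCat.{u} R) : ℕ∞ := sInf ((↑) '' {n : ℕ | fdLE R M n})

/-- The cotorsion dimension of a module, as an element of `ℕ∞`. -/
def cd (M : ModuleCat.{u} R) : ℕ∞ := sInf ((↑) '' {n : ℕ | cdLE R M n})

/-- The global dimension of a ring. -/
def gldim : ℕ∞ := ⨆ M : ModuleCat.{u} R, pd R M

/-- The weak global dimension of a ring. -/
def wdim : ℕ∞ := ⨆ M : ModuleCat.{u} R, fd R M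

/-- The global cotorsion dimension of a ring: the supremum of the projective
dimensions of all flat modules. -/
def cotD : ℕ∞ := ⨆ (M : ModuleCat.{u} R) (_ : Module.Flat R M), pd R M

/-- The finitistic projective dimension of a ring. -/
def FPD : ℕ∞ := sSup {d : ℕ∞ | d ≠ ⊤ ∧ ∃ M : ModuleCat.{u} R, pd R M = d}

/-- The finitistic flat dimension of a ring. -/
def FFD : ℕ∞ := sSup {d : ℕ∞ | d ≠ ⊤ ∧ ∃ M : ModuleCat.{u} R, fd R M = d}

/-- The finitistic injective dimension of a ring. -/
def FID : ℕ∞ := sSup {d : ℕ∞ | d ≠ ⊤ ∧ ∃ M : ModuleCat.{u} R, injd R M = d}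

/-- The finitistic cotorsion dimension of a ring. -/
def FCD : ℕ∞ := sSup {d : ℕ∞ | d ≠ ⊤ ∧ ∃ M : ModuleCat.{u} R, cd R M = d}

/-- `R` is `n`-perfect if every flat `R`-module has projective dimension at most `n`. -/
def IsNPerfect (n : ℕ) : Prop :=
  ∀ M : ModuleCat.{u} R, Module.Flat R M → pd R M ≤ n

end

/-!
If `wdim R ≤ w`, then `Tor_{w+1}(X, N) = 0` for all `X` and `N`. Dimension shifting along a
projective resolution `P` of `N` turns this into `Tor_1(X, K) = 0` for the `w`-th syzygy `K` of
`P`, so `K` is flat. Shifting along the same resolution gives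
`Ext^{c+w+1}(N, M) ≅ Ext^{c+1}(K, M)`, which vanishes when `cd M ≤ c`.
-/

noncomputable section

open CategoryTheory Limits LinearMap TensorProduct

namespace ChainComplex

variable {C : Type*} [Category C]

def drop [HasZeroMorphisms C] (Y : ChainComplex C ℕ) (w : ℕ) : ChainComplex C ℕ where
  X i := Y.X (w + i)
  d i j := Y.d (w + i) (w + j)
  shape i j h := Y.shape _ _ fun hij => h (by simp only [ComplexShape.down_Rel] at hij ⊢; omega)
  d_comp_d' _ _ _ _ _ := Y.d_comp_d _ _ _

variable [Abelian C]

def homologyDropIso (Y : ChainComplex C ℕ) (w n : ℕ) :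
    (Y.drop w).homology (n + 1) ≅ Y.homology (w + n + 1) :=
  HomologicalComplex.homologyIsoSc' _ (n + 2) (n + 1) n (by simp) (by simp) ≪≫
    (HomologicalComplex.homologyIsoSc' Y (w + n + 2) (w + n + 1) (w + n) (by simp) (by simp)).symm

lemma drop_exactAt_succ (Y : ChainComplex C ℕ) (w n : ℕ) (h : Y.ExactAt (w + n + 1)) :
    (Y.drop w).ExactAt (n + 1) := by
  rw [HomologicalComplex.exactAt_iff_isZero_homology] at h ⊢
  exact h.of_iso (Y.homologyDropIso w n)

end ChainComplex

namespace CategoryTheory.ProjectiveResolution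

variable {C : Type*} [Category C] [Abelian C] {N : C} (P : ProjectiveResolution N)

abbrev syzygy (w : ℕ) : C := cokernel (P.complex.d (w + 1) w)

def drop (w : ℕ) : ProjectiveResolution (P.syzygy w) where
  complex := P.complex.drop w
  projective n := P.projective (w + n)
  π := (ChainComplex.toSingle₀Equiv _ _).symm ⟨cokernel.π _, cokernel.condition _⟩
  quasiIso := ⟨fun n => by
    cases n with
    | zero =>
      rw [ChainComplex.quasiIsoAt₀_iff, ShortComplex.quasiIso_iff_of_zeros']
      · let S := ShortComplex.mk _ _ (cokernel.condition (P.complex.d (w + 1) w))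
        refine (ShortComplex.exact_and_epi_g_iff_of_iso (S₁ := S) ?_).1
          ⟨S.exact_of_g_is_cokernel (cokernelIsCokernel _),
            inferInstanceAs (Epi (cokernel.π _))⟩
        exact ShortComplex.isoMk (Iso.refl _) (Iso.refl _) (Iso.refl _)
          ((Category.id_comp _).trans (Category.comp_id _).symm)
          ((Category.id_comp _).trans ((ChainComplex.toSingle₀Equiv_symm_apply_f_zero _ _).trans
            (Category.comp_id _).symm))
      all_goals first | rfl | exact (P.complex.drop w).shape _ _ (by simp)
    | succ n =>
      rw [quasiIsoAt_iff_exactAt' _ _ (ChainComplex.exactAt_succ_single_obj _ _)]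
      exact P.complex.drop_exactAt_succ w n (P.complex_exactAt_succ (w + n))⟩

def leftDerivedIsoSyzygy {D : Type*} [Category D] [Abelian D] [HasProjectiveResolutions C]
    (G : C ⥤ D) [G.Additive] (w n : ℕ) :
    (G.leftDerived (w + n + 1)).obj N ≅ (G.leftDerived (n + 1)).obj (P.syzygy w) :=
  P.isoLeftDerivedObj G (w + n + 1) ≪≫
    (ChainComplex.homologyDropIso ((G.mapHomologicalComplex _).obj P.complex) w n).symm ≪≫
    ((P.drop w).isoLeftDerivedObj G (n + 1)).symm

end CategoryTheory.ProjectiveResolution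

lemma LinearMap.injective_of_exact_comp {R : Type*} [Semiring R] {A B T Q : Type*}
    [AddCommGroup A] [AddCommGroup B] [AddCommGroup T] [AddCommGroup Q]
    [Module R A] [Module R B] [Module R T] [Module R Q]
    {f : A →ₗ[R] B} {g : B →ₗ[R] T} {ι : T →ₗ[R] Q} (hg : Function.Surjective g)
    (hgf : g ∘ₗ f = 0) (h : Function.Exact f (ι ∘ₗ g)) : Function.Injective ι := by
  refine (injective_iff_map_eq_zero ι).2 fun t ht => ?_
  obtain ⟨b, rfl⟩ := hg t
  obtain ⟨a, rfl⟩ := (h b).1 ht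
  exact LinearMap.congr_fun hgf a

lemma LinearMap.lTensor_rTensor_comm {R : Type*} [CommSemiring R] {M N P Q : Type*}
    [AddCommMonoid M] [AddCommMonoid N] [AddCommMonoid P] [AddCommMonoid Q]
    [Module R M] [Module R N] [Module R P] [Module R Q]
    (f : M →ₗ[R] P) (g : N →ₗ[R] Q) (x : M ⊗[R] N) :
    g.lTensor P (f.rTensor N x) = f.rTensor Q (g.lTensor M x) := by
  rw [← LinearMap.comp_apply, lTensor_comp_rTensor, ← rTensor_comp_lTensor,
    LinearMap.comp_apply]

/- A diagram chase in the tensor product of `0 → A → B → B/A → 0` with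
`0 → T → Q → K → 0`. -/
theorem Module.Flat.of_exact_of_lTensor_injective {R : Type u} [CommRing R]
    {T Q K : Type u} [AddCommGroup T] [AddCommGroup Q] [AddCommGroup K]
    [Module R T] [Module R Q] [Module R K] [Module.Flat R Q]
    {ι : T →ₗ[R] Q} {p : Q →ₗ[R] K} (hp : Function.Surjective p)
    (hexact : Function.Exact ι p)
    (hι : ∀ (X : Type u) [AddCommGroup X] [Module R X], Function.Injective (ι.lTensor X)) :
    Module.Flat R K := by
  rw [Module.Flat.iff_rTensor_preserves_injective_linearMap]
  intro A B _ _ _ _ f hf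
  refine (injective_iff_map_eq_zero _).2 fun t ht => ?_
  obtain ⟨q, rfl⟩ := p.lTensor_surjective A hp t
  obtain ⟨s, hs⟩ := ((_root_.lTensor_exact B hexact hp) (f.rTensor Q q)).1
    (by rw [lTensor_rTensor_comm, ht])
  have hquot := exact_map_mkQ_range f
  have hs' : (range f).mkQ.rTensor T s = 0 := by
    refine (injective_iff_map_eq_zero _).1 (hι (B ⧸ range f)) _ ?_
    rw [lTensor_rTensor_comm, hs, ← LinearMap.comp_apply, ← rTensor_comp,
      hquot.linearMap_comp_eq_zero, rTensor_zero, LinearMap.zero_apply]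
  obtain ⟨u, rfl⟩ :=
    ((_root_.rTensor_exact T hquot (Submodule.mkQ_surjective _)) s).1 hs'
  have hq : ι.lTensor A u = q :=
    Module.Flat.rTensor_preserves_injective_linearMap f hf (by rw [← lTensor_rTensor_comm, hs])
  rw [← hq, ← LinearMap.comp_apply, ← lTensor_comp, hexact.linearMap_comp_eq_zero,
    lTensor_zero, LinearMap.zero_apply]

section

variable {R : Type u} [CommRing R]

lemma ModuleCat.subsingleton_iff_of_iso {A B : ModuleCat.{u} R} (e : A ≅ B) :
    Subsingleton A ↔ Subsingleton B :=
  ((forget (ModuleCat R)).mapIso e).toEquiv.subsingleton_congr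

lemma torVanish_iff_syzygy {N : ModuleCat.{u} R} (P : ProjectiveResolution N)
    (X : ModuleCat.{u} R) (w n : ℕ) :
    TorVanish R X N (w + n + 1) ↔ TorVanish R X (P.syzygy w) (n + 1) :=
  ModuleCat.subsingleton_iff_of_iso (P.leftDerivedIsoSyzygy _ w n)

lemma extVanish_iff_syzygy {N : ModuleCat.{u} R} (P : ProjectiveResolution N)
    (M : ModuleCat.{u} R) (w n : ℕ) :
    ExtVanish R N M (w + n + 1) ↔ ExtVanish R (P.syzygy w) M (n + 1) :=
  ModuleCat.subsingleton_iff_of_iso (P.leftDerivedIsoSyzygy _ w n).unop.symm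

lemma exact_lTensor_d_of_torVanish {K : ModuleCat.{u} R} (P : ProjectiveResolution K)
    (X : ModuleCat.{u} R) {n : ℕ} (h : TorVanish R X K (n + 1)) :
    Function.Exact ((P.complex.d (n + 2) (n + 1)).hom.lTensor X)
      ((P.complex.d (n + 1) n).hom.lTensor X) := by
  have hzero : IsZero ((((MonoidalCategory.tensorLeft X).mapHomologicalComplex _).obj
      P.complex).homology (n + 1)) :=
    (@ModuleCat.isZero_of_subsingleton _ _ _ h).of_iso (P.isoLeftDerivedObj _ (n + 1)).symm
  rwa [← HomologicalComplex.exactAt_iff_isZero_homology,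
    HomologicalComplex.exactAt_iff' _ (n + 2) (n + 1) n (by simp) (by simp),
    ShortComplex.ShortExact.moduleCat_exact_iff_function_exact] at hzero

theorem Module.Flat.of_forall_torVanish_one {K : ModuleCat.{u} R}
    (h : ∀ X : ModuleCat.{u} R, TorVanish R X K 1) : Module.Flat R K := by
  let P := projectiveResolution K
  let π₀ : P.complex.X 0 →ₗ[R] K := (P.π.f 0).hom
  have hexact₀ := P.exact₀.moduleCat_range_eq_ker
  let g : P.complex.X 1 →ₗ[R] ker π₀ :=
    (P.complex.d 1 0).hom.codRestrict _ fun x => hexact₀ ▸ mem_range_self _ x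
  have hg : Function.Surjective g := by
    rintro ⟨y, hy⟩
    obtain ⟨x, rfl⟩ := (hexact₀ ▸ hy : y ∈ range (P.complex.d 1 0).hom)
    exact ⟨x, rfl⟩
  have hgd : g ∘ₗ (P.complex.d 2 1).hom = 0 := by
    ext x
    exact congr($(P.complex.d_comp_d 2 1 0).hom x)
  have : Module.Projective R (P.complex.X 0) := (IsProjective.iff_projective _).2 (P.projective 0)
  refine Module.Flat.of_exact_of_lTensor_injective
    ((ModuleCat.epi_iff_surjective (P.π.f 0)).1 inferInstance) (exact_subtype_ker_map π₀)
    fun X _ _ => injective_of_exact_comp (lTensor_surjective _ hg)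
      (by rw [← lTensor_comp, hgd, lTensor_zero]) ?_
  rw [← lTensor_comp, show (ker π₀).subtype ∘ₗ g = (P.complex.d 1 0).hom from rfl]
  exact exact_lTensor_d_of_torVanish P (ModuleCat.of R X) (h _)

lemma fdLE.mono {X : ModuleCat.{u} R} {m w : ℕ} (h : fdLE R X m) (hmw : m ≤ w) :
    fdLE R X w := by
  intro N
  obtain ⟨k, rfl⟩ := Nat.exists_eq_add_of_le' hmw
  exact (torVanish_iff_syzygy (projectiveResolution N) X k m).2 (h _)

lemma flat_syzygy_of_forall_fdLE {N : ModuleCat.{u} R} (P : ProjectiveResolution N) {w : ℕ}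
    (h : ∀ X : ModuleCat.{u} R, fdLE R X w) : Module.Flat R (P.syzygy w) :=
  Module.Flat.of_forall_torVanish_one fun X => (torVanish_iff_syzygy P X w 0).1 (h X N)

lemma idLE_add_of_cdLE {M : ModuleCat.{u} R} {c w : ℕ} (hc : cdLE R M c)
    (hw : ∀ X : ModuleCat.{u} R, fdLE R X w) : idLE R M (c + w) := by
  intro N
  let P := projectiveResolution N
  rw [show c + w + 1 = w + c + 1 by omega, extVanish_iff_syzygy P M w c]
  exact hc _ (flat_syzygy_of_forall_fdLE P hw)

end

lemma ENat.exists_le_of_sInf_le {p : ℕ → Prop} {k : ℕ}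
    (h : sInf (((↑) : ℕ → ℕ∞) '' {n | p n}) ≤ k) : ∃ m ≤ k, p m := by
  by_contra! hp
  have : ((k + 1 : ℕ) : ℕ∞) ≤ sInf (((↑) : ℕ → ℕ∞) '' {n | p n}) := le_sInf <| by
    rintro _ ⟨m, hm, rfl⟩
    exact Nat.cast_le.2 (Nat.lt_of_not_le fun hmk => hp m hmk hm)
  exact absurd (Nat.cast_le.1 (this.trans h)) (by omega)

end

/-- `id_R(M) ≤ cd_R(M) + wdim R` for any module `M`. -/
theorem stmt_7 (R : Type u) [CommRing R] (M : ModuleCat.{u} R) :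
    injd R M ≤ cd R M + wdim R := by
  cases hc : cd R M with
  | top => simp
  | coe c =>
    cases hw : wdim R with
    | top => simp
    | coe w =>
      obtain ⟨c', hc'c, hc'⟩ := ENat.exists_le_of_sInf_le hc.le
      have hfd (X : ModuleCat.{u} R) : fdLE R X w := by
        obtain ⟨m, hmw, hm⟩ := ENat.exists_le_of_sInf_le ((le_iSup (fd R) X).trans hw.le)
        exact hm.mono hmw
      calc injd R M ≤ ((c' + w : ℕ) : ℕ∞) :=
            sInf_le ⟨c' + w, idLE_add_of_cdLE hc' hfd, rfl⟩
        _ ≤ c + w := by exact_mod_cast Nat.add_le_add_right hc'c w
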